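/- arXiv:math/0402444 — 4 statements merged into one kernel-verified Lean document; each statement's English description precedes it below -/
import Mathlib

section
/- Let (X,τ) be a Hausdorff topological space, Φ, Ψ : X → (-∞,+∞] two functions. Assume there is ρ > inf_X Ψ such that the closure of Ψ^{-1}((-∞,ρ)) is compact and sequentially compact, has at least k connected components, and each component intersects the interior of dom(Φ). Suppose Φ is bounded below on the closure of Ψ^{-1}((-∞,ρ)) and Ψ + λΦ is sequentially lower semicontinuous for all sufficiently small λ > 0. Then there exists λ* > 0 such that for every λ ∈ (0,λ*), the function Ψ + λΦ has at least k local minima with respect to the topology τ_Ψ, all lying in dom(Φ) ∩ Ψ^{-1}((-∞,ρ)). -/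
open Filter Set Topology

/-- `F` is sequentially lower semicontinuous. -/
def SeqLowerSemicontinuousE {X : Type*} [TopologicalSpace X] (F : X → EReal) : Prop :=
  ∀ x : X, ∀ u : ℕ → X, Tendsto u atTop (𝓝 x) → F x ≤ atTop.liminf (fun n => F (u n))

/-- The smallest topology on `X` containing the given topology `τ` and all the
sublevel sets `Ψ⁻¹((-∞, r))`, `r ∈ ℝ`. -/
def tauPsi {X : Type*} (τ : TopologicalSpace X) (Ψ : X → EReal) : TopologicalSpace X :=
  TopologicalSpace.generateFrom
    ({U : Set X | τ.IsOpen U} ∪ Set.range fun r : ℝ => Ψ ⁻¹' Set.Iio (r : EReal))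

/-!
Separate the `k` components of the compact set `C = closure {Ψ < ρ}` by pairwise disjoint
relatively clopen pieces `O i ∩ C`. On each piece `Ψ + λΦ` attains its minimum, by sequential
compactness and sequential lower semicontinuity. Each piece contains a point `w` with `Ψ w < ρ`
and `Φ w < ⊤`; comparing the minimiser `u` with `w` and using `Φ ≥ m` on `C` gives
`Ψ u ≤ Ψ w + λ (Φ w - m) < ρ` for small `λ`. Then `O i ∩ {Ψ < ρ}` is a `τ_Ψ`-open
neighbourhood of `u` on which `u` is minimal.
-/

open Function

theorem IsSeqCompact.of_isClosed_subset {X : Type*} [TopologicalSpace X] {C K : Set X}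
    (hC : IsSeqCompact C) (hK : IsClosed K) (hKC : K ⊆ C) : IsSeqCompact K := by
  intro u hu
  obtain ⟨x, -, φ, hφ, hlim⟩ := hC fun n => hKC (hu n)
  exact ⟨x, hK.mem_of_tendsto hlim (Eventually.of_forall fun n => hu (φ n)), φ, hφ, hlim⟩

theorem IsSeqCompact.exists_isMinOn_of_seqLowerSemicontinuousE {X : Type*} [TopologicalSpace X]
    {K : Set X} (hK : IsSeqCompact K) (hne : K.Nonempty) {F : X → EReal}
    (hF : SeqLowerSemicontinuousE F) : ∃ u ∈ K, IsMinOn F K u := by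
  obtain ⟨b, -, hb, hbF⟩ := exists_seq_tendsto_sInf (hne.image F) (OrderBot.bddBelow _)
  choose v hvK hvb using hbF
  obtain ⟨x, hxK, φ, hφ, hlim⟩ := hK hvK
  have hFx : F x ≤ sInf (F '' K) := by
    have hliminf : atTop.liminf (fun n => F (v (φ n))) = sInf (F '' K) := by
      simp only [hvb]
      exact (hb.comp hφ.tendsto_atTop).liminf_eq
    exact hliminf ▸ hF x _ hlim
  exact ⟨x, hxK, fun y hy => hFx.trans (sInf_le ⟨y, hy, rfl⟩)⟩

theorem exists_pairwise_disjoint_isClopen {Y ι : Type*} [TopologicalSpace Y] [Finite ι]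
    (x : ι → Y) (hsep : ∀ i j, i ≠ j → ∃ Z, IsClopen Z ∧ x i ∈ Z ∧ x j ∉ Z) :
    ∃ A : ι → Set Y, (∀ i, IsClopen (A i)) ∧ (∀ i, x i ∈ A i) ∧ Pairwise (Disjoint on A) := by
  choose Z hZ hxZ hxZ' using hsep
  refine ⟨fun i => ⋂ (j) (h : i ≠ j), Z i j h \ Z j i h.symm,
    fun i => isClopen_iInter_of_finite fun j => isClopen_iInter_of_finite fun h =>
      (hZ i j h).diff (hZ j i h.symm),
    fun i => mem_iInter₂.2 fun j h => ⟨hxZ i j h, hxZ' j i h.symm⟩, fun i j hij => ?_⟩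
  refine Set.disjoint_left.2 fun y hyi hyj => ?_
  exact (mem_iInter₂.1 hyi j hij).2 (mem_iInter₂.1 hyj i hij.symm).1

theorem exists_isClopen_mem_of_connectedComponent_ne {Y : Type*} [TopologicalSpace Y]
    [T2Space Y] [CompactSpace Y] {a b : Y} (h : connectedComponent a ≠ connectedComponent b) :
    ∃ Z, IsClopen Z ∧ a ∈ Z ∧ b ∉ Z := by
  by_contra! hZ
  refine h (connectedComponent_eq ?_)
  rw [connectedComponent_eq_iInter_isClopen]
  exact mem_iInter.2 fun Z => hZ Z Z.2.1 Z.2.2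

theorem IsCompact.exists_isOpen_separating_connectedComponentIn {X ι : Type*}
    [TopologicalSpace X] [T2Space X] [Finite ι] {C : Set X} (hC : IsCompact C) (x : ι → X)
    (hxC : ∀ i, x i ∈ C)
    (hx : ∀ i j, i ≠ j → connectedComponentIn C (x i) ≠ connectedComponentIn C (x j)) :
    ∃ O : ι → Set X, (∀ i, IsOpen (O i)) ∧ (∀ i, IsClosed (O i ∩ C)) ∧
      (∀ i, connectedComponentIn C (x i) ⊆ O i) ∧ Pairwise (Disjoint on fun i => O i ∩ C) := by
  have : CompactSpace C := isCompact_iff_compactSpace.mp hC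
  let x' : ι → C := fun i => ⟨x i, hxC i⟩
  have hcomp : ∀ i, connectedComponentIn C (x i) = Subtype.val '' connectedComponent (x' i) :=
    fun i => connectedComponentIn_eq_image (hxC i)
  obtain ⟨A, hA, hxA, hdisj⟩ := exists_pairwise_disjoint_isClopen x' fun i j hij =>
    exists_isClopen_mem_of_connectedComponent_ne fun h => hx i j hij (by rw [hcomp, hcomp, h])
  choose O hO hOA using fun i => isOpen_induced_iff.1 (hA i).isOpen
  have hOC : ∀ i, O i ∩ C = Subtype.val '' A i := fun i => by
    rw [← hOA i, Subtype.image_preimage_coe, inter_comm]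
  refine ⟨O, hO, fun i => hOC i ▸ hC.isClosed.isClosedMap_subtype_val _ (hA i).isClosed,
    fun i => ?_, fun i j hij => ?_⟩
  · rw [hcomp, image_subset_iff, hOA]
    exact (hA i).connectedComponent_subset (hxA i)
  · simp only [onFun, hOC]
    exact (hdisj hij).image Subtype.val_injective.injOn (subset_univ _) (subset_univ _)

theorem EReal.lt_and_ne_top_of_add_mul_le {a b : EReal} {s t m ρ lam : ℝ} (ha : a ≠ ⊥)
    (hb : (m : EReal) ≤ b) (hlam : 0 < lam) (h : a + lam * b ≤ s + lam * t)
    (hsmall : lam * (t - m) < ρ - s) : a < ρ ∧ b ≠ ⊤ := by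
  induction b using EReal.rec with
  | bot => simp at hb
  | top =>
    rw [EReal.coe_mul_top_of_pos hlam, EReal.add_top_of_ne_bot ha] at h
    exact absurd h (by simp [← EReal.coe_mul, ← EReal.coe_add])
  | coe b =>
    induction a using EReal.rec with
    | bot => exact absurd rfl ha
    | top => simp [← EReal.coe_mul, ← EReal.coe_add] at h
    | coe a =>
      norm_cast at h hb ⊢
      exact ⟨by nlinarith, EReal.coe_ne_top b⟩

theorem eventually_exists_isMinOn_add_mul {X : Type*} [TopologicalSpace X] {Φ Ψ : X → EReal}
    {K : Set X} (hK : IsSeqCompact K) {w : X} (hwK : w ∈ K) {ρ : ℝ} (hΨw : Ψ w < ρ)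
    (hΦw : Φ w ≠ ⊤) (hΨ : ∀ x ∈ K, Ψ x ≠ ⊥) {m : ℝ} (hm : ∀ x ∈ K, (m : EReal) ≤ Φ x)
    (hlsc : ∀ᶠ lam : ℝ in 𝓝[>] 0, SeqLowerSemicontinuousE fun x => Ψ x + lam * Φ x) :
    ∀ᶠ lam : ℝ in 𝓝[>] 0, ∃ u ∈ K, Φ u ≠ ⊤ ∧ Ψ u < ρ ∧
      IsMinOn (fun x => Ψ x + (lam : EReal) * Φ x) K u := by
  lift Ψ w to ℝ using ⟨hΨw.ne_top, hΨ w hwK⟩ with s hs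
  lift Φ w to ℝ using ⟨hΦw, ne_bot_of_le_ne_bot (EReal.coe_ne_bot m) (hm w hwK)⟩ with t ht
  have hsmall : ∀ᶠ lam : ℝ in 𝓝[>] 0, lam * (t - m) < ρ - s := by
    have hlim : Tendsto (fun lam : ℝ => lam * (t - m)) (𝓝 0) (𝓝 0) := by
      simpa using (continuous_mul_const (t - m)).tendsto 0
    exact nhdsWithin_le_nhds (hlim.eventually_lt_const (by simpa using hΨw))
  filter_upwards [hlsc, hsmall, self_mem_nhdsWithin] with lam hF hlam hpos
  obtain ⟨u, huK, hu⟩ := hK.exists_isMinOn_of_seqLowerSemicontinuousE ⟨w, hwK⟩ hF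
  have hle : Ψ u + lam * Φ u ≤ s + lam * t := hs ▸ ht ▸ hu hwK
  obtain ⟨hΨu, hΦu⟩ :=
    EReal.lt_and_ne_top_of_add_mul_le (hΨ u huK) (hm u huK) hpos hle hlam
  exact ⟨u, huK, hΦu, hΨu, hu⟩

theorem tauPsi_isOpen_inter_preimage_Iio {X : Type*} (τ : TopologicalSpace X) (Ψ : X → EReal)
    {O : Set X} (hO : τ.IsOpen O) (r : ℝ) : (tauPsi τ Ψ).IsOpen (O ∩ Ψ ⁻¹' Iio (r : EReal)) :=
  .inter _ _ (.basic _ (.inl hO)) (.basic _ (.inr ⟨r, rfl⟩))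

theorem stmt_2_general {X : Type*} [τ : TopologicalSpace X] [T2Space X]
    (Φ Ψ : X → EReal) (hΨbot : ∀ x, Ψ x ≠ ⊥)
    (k : ℕ) (ρ : ℝ)
    (hcpt : IsCompact (closure (Ψ ⁻¹' Set.Iio (ρ : EReal))))
    (hseqcpt : IsSeqCompact (closure (Ψ ⁻¹' Set.Iio (ρ : EReal))))
    (hcomp : ∃ x : Fin k → X, (∀ i, x i ∈ closure (Ψ ⁻¹' Set.Iio (ρ : EReal))) ∧
      ∀ i j, i ≠ j →
        connectedComponentIn (closure (Ψ ⁻¹' Set.Iio (ρ : EReal))) (x i) ≠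
          connectedComponentIn (closure (Ψ ⁻¹' Set.Iio (ρ : EReal))) (x j))
    (hint : ∀ x ∈ closure (Ψ ⁻¹' Set.Iio (ρ : EReal)),
      (connectedComponentIn (closure (Ψ ⁻¹' Set.Iio (ρ : EReal))) x ∩
        interior {y | Φ y ≠ ⊤}).Nonempty)
    (hbd : ∃ m : ℝ, ∀ x ∈ closure (Ψ ⁻¹' Set.Iio (ρ : EReal)), (m : EReal) ≤ Φ x)
    (hlsc : ∃ lam' > (0 : ℝ), ∀ lam : ℝ, 0 < lam → lam ≤ lam' →
      SeqLowerSemicontinuousE (fun x => Ψ x + (lam : EReal) * Φ x)) :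
    ∃ lamStar > (0 : ℝ), ∀ lam : ℝ, 0 < lam → lam < lamStar →
      ∃ m : Fin k → X, Function.Injective m ∧
        ∀ i, (m i ∈ {y | Φ y ≠ ⊤} ∩ Ψ ⁻¹' Set.Iio (ρ : EReal)) ∧
          ∃ U : Set X, (tauPsi τ Ψ).IsOpen U ∧ m i ∈ U ∧
            ∀ y ∈ U, Ψ (m i) + (lam : EReal) * Φ (m i) ≤ Ψ y + (lam : EReal) * Φ y := by
  set S := Ψ ⁻¹' Iio (ρ : EReal)
  obtain ⟨x, hxC, hx⟩ := hcomp
  obtain ⟨m, hm⟩ := hbd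
  obtain ⟨O, hO, hOS, hxO, hdisj⟩ := hcpt.exists_isOpen_separating_connectedComponentIn x hxC hx
  have hw : ∀ i, ∃ w ∈ O i ∩ S, Φ w ≠ ⊤ := fun i => by
    obtain ⟨z, hz, hzdom⟩ := hint (x i) (hxC i)
    obtain ⟨w, ⟨hwO, hwdom⟩, hwS⟩ := mem_closure_iff.1 (connectedComponentIn_subset _ _ hz)
      _ ((hO i).inter isOpen_interior) ⟨hxO i hz, hzdom⟩
    exact ⟨w, ⟨hwO, hwS⟩, interior_subset hwdom⟩
  choose w hwS hwdom using hw
  have hlsc' : ∀ᶠ lam : ℝ in 𝓝[>] 0, SeqLowerSemicontinuousE fun x => Ψ x + lam * Φ x := by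
    obtain ⟨lam', hlam', h⟩ := hlsc
    exact (nhdsGT_basis 0).eventually_iff.2 ⟨lam', hlam', fun lam hlam => h lam hlam.1 hlam.2.le⟩
  have hpieces := eventually_all.2 fun i =>
    eventually_exists_isMinOn_add_mul (hseqcpt.of_isClosed_subset (hOS i) inter_subset_right)
      ⟨(hwS i).1, subset_closure (hwS i).2⟩ (hwS i).2 (hwdom i) (fun y _ => hΨbot y)
      (fun y hy => hm y hy.2) hlsc'
  obtain ⟨lamStar, hlamStar, hmin⟩ := (nhdsGT_basis 0).eventually_iff.1 hpieces
  refine ⟨lamStar, hlamStar, fun lam hlam hlamlt => ?_⟩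
  choose u hu hΦu hΨu hmin using hmin ⟨hlam, hlamlt⟩
  refine ⟨u, fun i j hij => ?_, fun i => ⟨⟨hΦu i, hΨu i⟩, O i ∩ S,
    tauPsi_isOpen_inter_preimage_Iio τ Ψ (hO i) ρ, ⟨(hu i).1, hΨu i⟩,
    fun y hy => hmin i ⟨hy.1, subset_closure hy.2⟩⟩⟩
  by_contra hne
  exact Set.disjoint_left.1 (hdisj hne) (hu i) (hij ▸ hu j)

/-- Theorem 1 of the paper: under compactness and sequential compactness of the closure of a
sublevel set of `Ψ` having at least `k` connected components, each meeting the interior of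
`dom Φ`, with `Φ` bounded below there and `Ψ + λΦ` sequentially lsc for small `λ > 0`,
for all sufficiently small `λ > 0` the function `Ψ + λΦ` has at least `k` `τ_Ψ`-local
minima lying in `dom Φ ∩ Ψ⁻¹((-∞, ρ))`. -/
theorem stmt_2 {X : Type*} [τ : TopologicalSpace X] [T2Space X]
    (Φ Ψ : X → EReal) (hΦbot : ∀ x, Φ x ≠ ⊥) (hΨbot : ∀ x, Ψ x ≠ ⊥)
    (k : ℕ) (hk : 0 < k) (ρ : ℝ) (hρ : (⨅ x, Ψ x) < (ρ : EReal))
    (hcpt : IsCompact (closure (Ψ ⁻¹' Set.Iio (ρ : EReal))))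
    (hseqcpt : IsSeqCompact (closure (Ψ ⁻¹' Set.Iio (ρ : EReal))))
    (hcomp : ∃ x : Fin k → X, (∀ i, x i ∈ closure (Ψ ⁻¹' Set.Iio (ρ : EReal))) ∧
      ∀ i j, i ≠ j →
        connectedComponentIn (closure (Ψ ⁻¹' Set.Iio (ρ : EReal))) (x i) ≠
          connectedComponentIn (closure (Ψ ⁻¹' Set.Iio (ρ : EReal))) (x j))
    (hint : ∀ x ∈ closure (Ψ ⁻¹' Set.Iio (ρ : EReal)),
      (connectedComponentIn (closure (Ψ ⁻¹' Set.Iio (ρ : EReal))) x ∩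
        interior {y | Φ y ≠ ⊤}).Nonempty)
    (hbd : ∃ m : ℝ, ∀ x ∈ closure (Ψ ⁻¹' Set.Iio (ρ : EReal)), (m : EReal) ≤ Φ x)
    (hlsc : ∃ lam' > (0 : ℝ), ∀ lam : ℝ, 0 < lam → lam ≤ lam' →
      SeqLowerSemicontinuousE (fun x => Ψ x + (lam : EReal) * Φ x)) :
    ∃ lamStar > (0 : ℝ), ∀ lam : ℝ, 0 < lam → lam < lamStar →
      ∃ m : Fin k → X, Function.Injective m ∧
        ∀ i, (m i ∈ {y | Φ y ≠ ⊤} ∩ Ψ ⁻¹' Set.Iio (ρ : EReal)) ∧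
          ∃ U : Set X, (tauPsi τ Ψ).IsOpen U ∧ m i ∈ U ∧
            ∀ y ∈ U, Ψ (m i) + (lam : EReal) * Φ (m i) ≤ Ψ y + (lam : EReal) * Φ y :=
  stmt_2_general (τ := τ) Φ Ψ hΨbot k ρ hcpt hseqcpt hcomp hint hbd hlsc
end

section
/- Let X be a Hausdorff topological space and Ψ : X → (-∞,+∞] sequentially lower semicontinuous. Assume there is r > inf_X Ψ such that the closure of Ψ^{-1}((-∞,r)) is compact and first-countable, and that the set of global minima of Ψ has at least k connected components. Then there exists ρ* ∈ (inf_X Ψ, r] such that for every ρ ∈ (inf_X Ψ, ρ*], the closure of Ψ^{-1}((-∞,ρ)) has at least k connected components. -/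
open Filter Set Topology

lemma myIsCompact_connectedComponentIn {X : Type*} [TopologicalSpace X] [T2Space X] {F : Set X}
    (hF : IsCompact F) (x : X) : IsCompact (connectedComponentIn F x) := by
  by_cases hx : x ∈ F
  · rw [connectedComponentIn_eq_image hx]
    have : CompactSpace F := isCompact_iff_compactSpace.mp hF
    exact (isClosed_connectedComponent.isCompact).image continuous_subtype_val
  · rw [connectedComponentIn_eq_empty hx]; exact isCompact_empty

lemma myIsPreconnected_iInter_directed {X : Type*} [TopologicalSpace X] [T2Space X]
    {ι : Type*} [Nonempty ι] {K : ι → Set X} (hd : Directed (· ⊇ ·) K)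
    (hne : ∀ i, (K i).Nonempty)
    (hc : ∀ i, IsCompact (K i)) (hp : ∀ i, IsPreconnected (K i)) :
    IsPreconnected (⋂ i, K i) := by
  rw [isPreconnected_iff_subset_of_disjoint_closed]
  intro u v hu hv hsub hdisj
  set S := ⋂ i, K i with hS
  have hSK : ∀ i, S ⊆ K i := fun i => iInter_subset _ _
  have hSclosed : IsClosed S := isClosed_iInter fun i => (hc i).isClosed
  have hScompact : IsCompact S :=
    (hc (Classical.arbitrary ι)).of_isClosed_subset hSclosed (hSK _)
  by_cases hA : (S ∩ u).Nonempty
  swap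
  · right; intro z hz
    rcases hsub hz with h | h
    · exact absurd ⟨z, hz, h⟩ hA
    · exact h
  by_cases hB : (S ∩ v).Nonempty
  swap
  · left; intro z hz
    rcases hsub hz with h | h
    · exact h
    · exact absurd ⟨z, hz, h⟩ hB
  exfalso
  have hAc : IsCompact (S ∩ u) := hScompact.inter_right hu
  have hBc : IsCompact (S ∩ v) := hScompact.inter_right hv
  have hdisj' : Disjoint (S ∩ u) (S ∩ v) := by
    rw [Set.disjoint_iff_inter_eq_empty]
    have heq : S ∩ u ∩ (S ∩ v) = S ∩ (u ∩ v) := by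
      ext z
      simp only [Set.mem_inter_iff]
      tauto
    rw [heq, hdisj]
  obtain ⟨U, V, hU, hV, hAU, hBV, hUV⟩ := SeparatedNhds.of_isCompact_isCompact hAc hBc hdisj'
  have hex : ∃ i, K i ⊆ U ∪ V := by
    by_contra h
    push_neg at h
    have h1 : (⋂ i, K i \ (U ∪ V)).Nonempty := by
      apply IsCompact.nonempty_iInter_of_directed_nonempty_isCompact_isClosed
      · intro i j
        rcases hd i j with ⟨l, h1, h2⟩
        exact ⟨l, diff_subset_diff_left h1, diff_subset_diff_left h2⟩
      · intro i
        rcases not_subset.mp (h i) with ⟨z, hz1, hz2⟩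
        exact ⟨z, hz1, hz2⟩
      · intro i; exact (hc i).diff (hU.union hV)
      · intro i; exact ((hc i).isClosed).sdiff (hU.union hV)
    rcases h1 with ⟨z, hz⟩
    have hzS : z ∈ S := mem_iInter.mpr fun i => (mem_iInter.mp hz i).1
    have hzW : z ∉ U ∪ V := (mem_iInter.mp hz (Classical.arbitrary ι)).2
    rcases hsub hzS with h' | h'
    · exact hzW (Or.inl (hAU ⟨hzS, h'⟩))
    · exact hzW (Or.inr (hBV ⟨hzS, h'⟩))
  rcases hex with ⟨i, hi⟩
  rcases hA with ⟨a, ha⟩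
  rcases hB with ⟨b, hb⟩
  have := hp i U V hU hV hi ⟨a, hSK i ha.1, hAU ha⟩ ⟨b, hSK i hb.1, hBV hb⟩
  rcases this with ⟨c, _, hc1, hc2⟩
  exact hUV.ne_of_mem hc1 hc2 rfl

lemma myPsi_eq_inf {X : Type*} [TopologicalSpace X] (Ψ : X → EReal)
    (hlsc : SeqLowerSemicontinuousE Ψ) (r : ℝ) (hr : (⨅ x, Ψ x) < (r : EReal))
    (hfc : FirstCountableTopology (closure (Ψ ⁻¹' Set.Iio (r : EReal))))
    {z : X} (hz : ∀ ρ : ℝ, (⨅ x, Ψ x) < (ρ : EReal) → ρ ≤ r →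
      z ∈ closure (Ψ ⁻¹' Set.Iio (ρ : EReal))) :
    Ψ z = ⨅ x, Ψ x := by
  haveI := hfc
  set m := ⨅ x, Ψ x with hm
  have key : ∀ ρ : ℝ, m < (ρ : EReal) → ρ ≤ r → Ψ z ≤ (ρ : EReal) := by
    intro ρ hρ1 hρ2
    set S : Set X := closure (Ψ ⁻¹' Set.Iio (r : EReal)) with hSdef
    have hsubS : Ψ ⁻¹' Set.Iio (ρ : EReal) ⊆ S :=
      (preimage_mono (Iio_subset_Iio (EReal.coe_le_coe_iff.mpr hρ2))).trans subset_closure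
    have hzS : z ∈ S :=
      closure_mono (preimage_mono (Iio_subset_Iio (EReal.coe_le_coe_iff.mpr hρ2)))
        (hz ρ hρ1 hρ2)
    set z' : S := ⟨z, hzS⟩ with hz'
    have hmem : z' ∈ closure ((Subtype.val : S → X) ⁻¹' (Ψ ⁻¹' Set.Iio (ρ : EReal))) := by
      rw [IsInducing.subtypeVal.closure_eq_preimage_closure_image]
      have himg : (Subtype.val : S → X) '' ((Subtype.val : S → X) ⁻¹' (Ψ ⁻¹' Set.Iio (ρ : EReal)))
          = Ψ ⁻¹' Set.Iio (ρ : EReal) := by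
        rw [Set.image_preimage_eq_inter_range, Subtype.range_coe,
          inter_eq_self_of_subset_left hsubS]
      rw [Set.mem_preimage, himg]
      exact hz ρ hρ1 hρ2
    obtain ⟨u, hu_mem, hu_tendsto⟩ := mem_closure_iff_seq_limit.mp hmem
    have htend : Tendsto (fun n => ((u n : X))) atTop (𝓝 z) :=
      (continuous_subtype_val.tendsto z').comp hu_tendsto
    refine (hlsc z _ htend).trans ?_
    calc atTop.liminf (fun n => Ψ (u n : X)) ≤ atTop.liminf (fun _ => (ρ : EReal)) :=
          liminf_le_liminf (Eventually.of_forall fun n => le_of_lt (hu_mem n))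
      _ = (ρ : EReal) := liminf_const _
  refine le_antisymm ?_ (iInf_le _ z)
  by_contra hlt
  push_neg at hlt
  have hlt2 : m < min (Ψ z) (r : EReal) := lt_min hlt hr
  obtain ⟨ρ, hρ1, hρ2⟩ := EReal.exists_between_coe_real hlt2
  have hρr : (ρ : EReal) < (r : EReal) := hρ2.trans_le (min_le_right _ _)
  have hρψ : (ρ : EReal) < Ψ z := hρ2.trans_le (min_le_left _ _)
  exact absurd ((key ρ hρ1 (EReal.coe_le_coe_iff.mp hρr.le)).trans_lt hρψ) (lt_irrefl _)

/-- Proposition 1 of the paper: if `Ψ` is sequentially lower semicontinuous, the closure of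
the sublevel set `Ψ⁻¹((-∞, r))` is compact and first-countable for some `r > inf Ψ`, and
the set of global minima of `Ψ` has at least `k` connected components, then there is
`ρ* ∈ (inf Ψ, r]` such that for every `ρ ∈ (inf Ψ, ρ*]` the closure of `Ψ⁻¹((-∞, ρ))`
has at least `k` connected components. -/
theorem stmt_3 {X : Type*} [TopologicalSpace X] [T2Space X]
    (Ψ : X → EReal) (hlsc : SeqLowerSemicontinuousE Ψ)
    (k : ℕ) (hk : 0 < k) (r : ℝ) (hr : (⨅ x, Ψ x) < (r : EReal))
    (hcpt : IsCompact (closure (Ψ ⁻¹' Set.Iio (r : EReal))))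
    (hfc : FirstCountableTopology (closure (Ψ ⁻¹' Set.Iio (r : EReal))))
    (hmin : ∃ x : Fin k → X, (∀ i, Ψ (x i) = ⨅ y, Ψ y) ∧
      ∀ i j, i ≠ j →
        connectedComponentIn {y | Ψ y = ⨅ z, Ψ z} (x i) ≠
          connectedComponentIn {y | Ψ y = ⨅ z, Ψ z} (x j)) :
    ∃ ρStar : ℝ, (⨅ x, Ψ x) < (ρStar : EReal) ∧ ρStar ≤ r ∧
      ∀ ρ : ℝ, (⨅ x, Ψ x) < (ρ : EReal) → ρ ≤ ρStar →
        ∃ x : Fin k → X, (∀ i, x i ∈ closure (Ψ ⁻¹' Set.Iio (ρ : EReal))) ∧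
          ∀ i j, i ≠ j →
            connectedComponentIn (closure (Ψ ⁻¹' Set.Iio (ρ : EReal))) (x i) ≠
              connectedComponentIn (closure (Ψ ⁻¹' Set.Iio (ρ : EReal))) (x j) := by
  classical
  obtain ⟨x, hxmin, hxdist⟩ := hmin
  have hCmono : ∀ {ρ ρ' : ℝ}, ρ ≤ ρ' →
      closure (Ψ ⁻¹' Set.Iio (ρ : EReal)) ⊆ closure (Ψ ⁻¹' Set.Iio (ρ' : EReal)) :=
    fun h => closure_mono (preimage_mono (Iio_subset_Iio (EReal.coe_le_coe_iff.mpr h)))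
  have hxC : ∀ (i : Fin k) (ρ : ℝ), (⨅ y, Ψ y) < (ρ : EReal) →
      x i ∈ closure (Ψ ⁻¹' Set.Iio (ρ : EReal)) := by
    intro i ρ hρ
    apply subset_closure
    simp only [mem_preimage, mem_Iio, hxmin i]
    exact hρ
  suffices h : ∃ ρS : ℝ, (⨅ y, Ψ y) < (ρS : EReal) ∧ ρS ≤ r ∧
      ∀ i j, i ≠ j →
        connectedComponentIn (closure (Ψ ⁻¹' Set.Iio (ρS : EReal))) (x i) ≠
          connectedComponentIn (closure (Ψ ⁻¹' Set.Iio (ρS : EReal))) (x j) by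
    obtain ⟨ρS, h1, h2, h3⟩ := h
    refine ⟨ρS, h1, h2, fun ρ hρ1 hρ2 => ⟨x, fun i => hxC i ρ hρ1, fun i j hij hEq => h3 i j hij ?_⟩⟩
    have hj : x j ∈ connectedComponentIn (closure (Ψ ⁻¹' Set.Iio (ρ : EReal))) (x i) := by
      rw [hEq]; exact mem_connectedComponentIn (hxC j ρ hρ1)
    exact connectedComponentIn_eq (connectedComponentIn_mono _ (hCmono hρ2) hj)
  by_contra hcon
  push_neg at hcon
  -- hcon : ∀ ρS, inf < ρS → ρS ≤ r → ∃ i j, i ≠ j ∧ comps equal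
  have hcof : ∃ i j : Fin k, i ≠ j ∧ ∀ ρ : ℝ, (⨅ y, Ψ y) < (ρ : EReal) → ρ ≤ r →
      ∃ ρ' : ℝ, ((⨅ y, Ψ y) < (ρ' : EReal) ∧ ρ' ≤ r ∧
        connectedComponentIn (closure (Ψ ⁻¹' Set.Iio (ρ' : EReal))) (x i) =
          connectedComponentIn (closure (Ψ ⁻¹' Set.Iio (ρ' : EReal))) (x j)) ∧ ρ' ≤ ρ := by
    by_contra hno
    push_neg at hno
    have hno' : ∀ i j : Fin k, i ≠ j → ∃ ρ : ℝ, (⨅ y, Ψ y) < (ρ : EReal) ∧ ρ ≤ r ∧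
        ∀ ρ' : ℝ, ((⨅ y, Ψ y) < (ρ' : EReal) ∧ ρ' ≤ r ∧
          connectedComponentIn (closure (Ψ ⁻¹' Set.Iio (ρ' : EReal))) (x i) =
            connectedComponentIn (closure (Ψ ⁻¹' Set.Iio (ρ' : EReal))) (x j)) → ρ < ρ' := hno
    set f : Fin k × Fin k → ℝ := fun p =>
      if h : p.1 ≠ p.2 then (hno' p.1 p.2 h).choose else r with hf
    have hfprop : ∀ p : Fin k × Fin k, (⨅ y, Ψ y) < ((f p : ℝ) : EReal) ∧ f p ≤ r := by
      intro p
      by_cases h : p.1 ≠ p.2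
      · simp only [hf, dif_pos h]
        exact ⟨(hno' p.1 p.2 h).choose_spec.1, (hno' p.1 p.2 h).choose_spec.2.1⟩
      · simp only [hf, dif_neg h]
        exact ⟨hr, le_rfl⟩
    haveI : NeZero k := ⟨hk.ne'⟩
    have hneu : (Finset.univ : Finset (Fin k × Fin k)).Nonempty := Finset.univ_nonempty
    set ρ₀ : ℝ := Finset.univ.inf' hneu f with hρ₀
    obtain ⟨p₀, _, hp₀⟩ := Finset.exists_mem_eq_inf' hneu f
    have hρ₀m : (⨅ y, Ψ y) < (ρ₀ : EReal) := by rw [hρ₀, hp₀]; exact (hfprop p₀).1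
    have hρ₀r : ρ₀ ≤ r := by rw [hρ₀, hp₀]; exact (hfprop p₀).2
    obtain ⟨i, j, hij, hEq⟩ := hcon ρ₀ hρ₀m hρ₀r
    have hlt := (hno' i j hij).choose_spec.2.2 ρ₀ ⟨hρ₀m, hρ₀r, hEq⟩
    have hle : ρ₀ ≤ f (i, j) := Finset.inf'_le f (Finset.mem_univ (i, j))
    rw [hf] at hle
    simp only [ne_eq, dif_pos hij] at hle
    exact absurd hlt (not_lt.mpr hle)
  obtain ⟨i0, j0, hij0, hcof⟩ := hcof
  set T : Set ℝ := {ρ : ℝ | (⨅ y, Ψ y) < (ρ : EReal) ∧ ρ ≤ r ∧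
      connectedComponentIn (closure (Ψ ⁻¹' Set.Iio (ρ : EReal))) (x i0) =
        connectedComponentIn (closure (Ψ ⁻¹' Set.Iio (ρ : EReal))) (x j0)} with hT
  haveI hTne : Nonempty T := by
    obtain ⟨ρ', h1, _⟩ := hcof r hr le_rfl
    exact ⟨⟨ρ', h1⟩⟩
  set K : T → Set X := fun ρ =>
    connectedComponentIn (closure (Ψ ⁻¹' Set.Iio ((ρ : ℝ) : EReal))) (x i0) with hK
  have hKc : ∀ ρ : T, IsCompact (K ρ) := fun ρ =>
    myIsCompact_connectedComponentIn
      (hcpt.of_isClosed_subset isClosed_closure (hCmono ρ.2.2.1)) _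
  have hKp : ∀ ρ : T, IsPreconnected (K ρ) := fun _ => isPreconnected_connectedComponentIn
  have hKi : ∀ ρ : T, x i0 ∈ K ρ := fun ρ => mem_connectedComponentIn (hxC i0 ρ ρ.2.1)
  have hKj : ∀ ρ : T, x j0 ∈ K ρ := by
    intro ρ
    have h1 := mem_connectedComponentIn (F := closure (Ψ ⁻¹' Set.Iio ((ρ : ℝ) : EReal)))
      (hxC j0 ρ ρ.2.1)
    show x j0 ∈ connectedComponentIn (closure (Ψ ⁻¹' Set.Iio ((ρ : ℝ) : EReal))) (x i0)
    rw [ρ.2.2.2]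
    exact h1
  have hdir : Directed (· ⊇ ·) K := by
    intro ρ₁ ρ₂
    have hminm : (⨅ y, Ψ y) < ((min (ρ₁ : ℝ) (ρ₂ : ℝ) : ℝ) : EReal) := by
      rcases min_cases (ρ₁ : ℝ) (ρ₂ : ℝ) with ⟨h, _⟩ | ⟨h, _⟩ <;> rw [h]
      · exact ρ₁.2.1
      · exact ρ₂.2.1
    have hminr : min (ρ₁ : ℝ) (ρ₂ : ℝ) ≤ r := (min_le_left _ _).trans ρ₁.2.2.1
    obtain ⟨ρ₃, hρ₃, hρ₃le⟩ := hcof _ hminm hminr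
    refine ⟨⟨ρ₃, hρ₃⟩, ?_, ?_⟩
    · exact connectedComponentIn_mono _ (hCmono (hρ₃le.trans (min_le_left _ _)))
    · exact connectedComponentIn_mono _ (hCmono (hρ₃le.trans (min_le_right _ _)))
  set Kinf : Set X := ⋂ ρ : T, K ρ with hKinf
  have hi0mem : x i0 ∈ Kinf := mem_iInter.mpr hKi
  have hj0mem : x j0 ∈ Kinf := mem_iInter.mpr hKj
  have hpre : IsPreconnected Kinf :=
    myIsPreconnected_iInter_directed hdir (fun ρ => ⟨x i0, hKi ρ⟩) hKc hKp
  have hsubM : Kinf ⊆ {y | Ψ y = ⨅ z, Ψ z} := by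
    intro z hz
    apply myPsi_eq_inf Ψ hlsc r hr hfc
    intro ρ h1 h2
    obtain ⟨ρ', hρ', hle⟩ := hcof ρ h1 h2
    exact hCmono hle (connectedComponentIn_subset _ _ (mem_iInter.mp hz ⟨ρ', hρ'⟩))
  have hsubcomp : Kinf ⊆ connectedComponentIn {y | Ψ y = ⨅ z, Ψ z} (x i0) :=
    hpre.subset_connectedComponentIn hi0mem hsubM
  exact hxdist i0 j0 hij0 (connectedComponentIn_eq (hsubcomp hj0mem))
end

section
/- Let X be a real Hilbert space and J : X → ℝ continuously differentiable with compact derivative. Define Ψ(x) = ½‖x‖² − J(x) and assume for some r > inf_X Ψ the set Ψ^{-1}((-∞,r)) is bounded. Then the set Ψ^{-1}(inf_X Ψ) of global minimizers of Ψ is compact. -/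
/-!
A global minimizer `x` of `Ψ = ½‖·‖² - J` is a critical point, and the gradient of `Ψ` at `x`
is `x - J' x`, so `x` is a fixed point of `J'`. The minimizers form a closed set (`Ψ` is
continuous) contained in the bounded sublevel set `{Ψ < r}`; being fixed by `J'`, they lie in
the image under `J'` of a bounded set, whose closure is compact.
-/

open InnerProductSpace

theorem isCompact_of_isClosed_of_isFixedPt {α : Type*} [TopologicalSpace α] {F : α → α}
    {s : Set α} (hs : IsClosed s) (hF : IsCompact (closure (F '' s)))
    (hfix : ∀ x ∈ s, Function.IsFixedPt F x) : IsCompact s :=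
  hF.of_isClosed_subset hs fun x hx => subset_closure ⟨x, hx, hfix x hx⟩

section Gradient

variable {X : Type*} [NormedAddCommGroup X] [InnerProductSpace ℝ X] [CompleteSpace X]

theorem IsLocalMin.hasGradientAt_eq_zero {f : X → ℝ} {g x : X} (hmin : IsLocalMin f x)
    (hf : HasGradientAt f g x) : g = 0 :=
  (toDual ℝ X).map_eq_zero_iff.mp (hmin.hasFDerivAt_eq_zero hf.hasFDerivAt)

theorem HasGradientAt.half_norm_sq_sub {J : X → ℝ} {g x : X} (hJ : HasGradientAt J g x) :
    HasGradientAt (fun y => (1 / 2 : ℝ) * ‖y‖ ^ 2 - J y) (x - g) x := by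
  rw [hasGradientAt_iff_hasFDerivAt] at hJ ⊢
  refine (((hasStrictFDerivAt_norm_sq x).hasFDerivAt.const_mul (1 / 2 : ℝ)).sub hJ).congr_fderiv
    ?_
  ext y
  simp

end Gradient

theorem stmt_9_general {X : Type*} [NormedAddCommGroup X] [InnerProductSpace ℝ X] [CompleteSpace X]
    (J : X → ℝ) (J' : X → X) (hgrad : ∀ x, HasGradientAt J (J' x) x)
    (hcompact : ∀ s : Set X, Bornology.IsBounded s → IsCompact (closure (J' '' s)))
    (Ψ : X → ℝ) (hΨ : ∀ x, Ψ x = (1 / 2 : ℝ) * ‖x‖ ^ 2 - J x)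
    (r : ℝ) (hr : ∃ x, Ψ x < r) (hbdd : Bornology.IsBounded {x | Ψ x < r}) :
    IsCompact {x | ∀ y, Ψ x ≤ Ψ y} := by
  have hΨgrad : ∀ x, HasGradientAt Ψ (x - J' x) x := by
    rw [show Ψ = _ from funext hΨ]
    exact fun x => (hgrad x).half_norm_sq_sub
  have hΨcont : Continuous Ψ :=
    continuous_iff_continuousAt.mpr fun x => (hΨgrad x).hasFDerivAt.continuousAt
  have hclosed : IsClosed {x | ∀ y, Ψ x ≤ Ψ y} := by
    simp only [Set.ofPred_forall]
    exact isClosed_iInter fun y => isClosed_le hΨcont continuous_const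
  obtain ⟨x₀, hx₀⟩ := hr
  have hbounded : Bornology.IsBounded {x | ∀ y, Ψ x ≤ Ψ y} :=
    hbdd.subset fun x hx => (hx x₀).trans_lt hx₀
  refine isCompact_of_isClosed_of_isFixedPt hclosed (hcompact _ hbounded) fun x hx => ?_
  have hmin : IsLocalMin Ψ x := Filter.Eventually.of_forall hx
  have hcrit := hmin.hasGradientAt_eq_zero (hΨgrad x)
  exact (sub_eq_zero.mp hcrit).symm

/-- Proposition 2 of the paper: let `X` be a real Hilbert space, `J : X → ℝ` continuously
differentiable with compact gradient `J'`, and `Ψ x = ½‖x‖² − J x`. If for some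
`r > inf Ψ` the sublevel set `Ψ⁻¹((-∞, r))` is bounded, then the set of global
minimizers of `Ψ` is compact. -/
theorem stmt_9 {X : Type*} [NormedAddCommGroup X] [InnerProductSpace ℝ X] [CompleteSpace X]
    (J : X → ℝ) (J' : X → X) (hgrad : ∀ x, HasGradientAt J (J' x) x)
    (hcont : Continuous J')
    (hcompact : ∀ s : Set X, Bornology.IsBounded s → IsCompact (closure (J' '' s)))
    (Ψ : X → ℝ) (hΨ : ∀ x, Ψ x = (1 / 2 : ℝ) * ‖x‖ ^ 2 - J x)
    (r : ℝ) (hr : ∃ x, Ψ x < r) (hbdd : Bornology.IsBounded {x | Ψ x < r}) :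
    IsCompact {x | ∀ y, Ψ x ≤ Ψ y} :=
  stmt_9_general J J' hgrad hcompact Ψ hΨ r hr hbdd
end

section
/- Let X be a separable real Hilbert space and J : X → ℝ continuous, Gâteaux differentiable and sequentially weakly upper semicontinuous. Set Ψ(x) = ½‖x‖² − J(x). Assume for some r > inf_X Ψ the set Ψ^{-1}((-∞,r)) is bounded and the restriction of J' to Ψ^{-1}((-∞,r)) is nonexpansive. Then for every ρ ∈ (inf_X Ψ, r), the sets Ψ^{-1}((-∞,ρ]) and Ψ^{-1}(inf_X Ψ) are connected in the weak topology of X. -/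
/-!
Along a line `t ↦ u + t • w`, the derivative of `Ψ` is `⟪u + t • w - J' (u + t • w), w⟫`, and since
`id - J'` is a monotone operator on `{Ψ < r}` this derivative is nondecreasing at the parameters
where `Ψ < r`. A real function with that property cannot rise above a level `μ < r` and come back
down, because the mean value theorem would produce a positive slope before a negative one inside
`{Ψ < r}`. Hence the sublevel sets `{Ψ ≤ μ}`, `μ < r`, are convex. They are also closed and bounded,
so in the Hilbert space `X` every nested sequence of them has a common point (the minimal-norm
points form a Cauchy sequence); this yields a global minimizer of `Ψ`. Convex sets are connected in
any topological vector space, in particular in the weak topology.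
-/

open Filter Topology Set

theorem cauchySeq_of_sq_dist_le_sub {α : Type*} [PseudoMetricSpace α] {x : ℕ → α} {a : ℕ → ℝ}
    (ha : Monotone a) (ha' : BddAbove (range a))
    (h : ∀ n m, n ≤ m → dist (x n) (x m) ^ 2 ≤ a m - a n) : CauchySeq x := by
  rw [Metric.cauchySeq_iff]
  intro ε hε
  obtain ⟨N, hN⟩ :=
    Metric.cauchySeq_iff.1 (tendsto_atTop_ciSup ha ha').cauchySeq (ε ^ 2) (by positivity)
  refine ⟨N, fun m hm n hn => ?_⟩
  have hsq : dist (x m) (x n) ^ 2 < ε ^ 2 := by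
    rcases le_total m n with hmn | hnm
    · calc dist (x m) (x n) ^ 2 ≤ a n - a m := h m n hmn
        _ ≤ dist (a n) (a m) := le_abs_self _
        _ < ε ^ 2 := hN n hn m hm
    · calc dist (x m) (x n) ^ 2 = dist (x n) (x m) ^ 2 := by rw [dist_comm]
        _ ≤ a m - a n := h n m hnm
        _ ≤ dist (a m) (a n) := le_abs_self _
        _ < ε ^ 2 := hN m hm n hn
  exact (pow_lt_pow_iff_left₀ dist_nonneg hε.le two_ne_zero).1 hsq

theorem exists_forall_le_of_antitone_sublevels {α : Type*} {f : α → ℝ} {r : ℝ}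
    (hr : ∃ x, f x < r)
    (h : ∀ c : ℕ → ℝ, Antitone c → (∀ n, c n < r) → (∀ n, ∃ x, f x ≤ c n) →
      ∃ x, ∀ n, f x ≤ c n) :
    ∃ x, ∀ y, f x ≤ f y := by
  obtain ⟨x₀, hx₀⟩ := hr
  have : Nonempty α := ⟨x₀⟩
  have hbdd : BddBelow (range f) := by
    by_contra hunbdd
    obtain ⟨x, hx⟩ := h (fun n => r - (n + 1))
      (fun n m hnm => by simp only; gcongr)
      (fun n => by linarith)
      (fun n => by
        obtain ⟨_, ⟨y, rfl⟩, hy⟩ := not_bddBelow_iff.1 hunbdd (r - (n + 1))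
        exact ⟨y, hy.le⟩)
    obtain ⟨n, hn⟩ := exists_nat_gt (r - f x)
    linarith [hx n]
  obtain ⟨c, hanti, hc, hlim⟩ :=
    exists_seq_strictAnti_tendsto' ((ciInf_le hbdd x₀).trans_lt hx₀)
  obtain ⟨x, hx⟩ := h c hanti.antitone (fun n => (hc n).2) fun n => by
    obtain ⟨y, hy⟩ := exists_lt_of_ciInf_lt (hc n).1
    exact ⟨y, hy.le⟩
  exact ⟨x, fun y => (ge_of_tendsto' hlim hx).trans (ciInf_le hbdd y)⟩

section RealLine

variable {g g' : ℝ → ℝ} {a b ν : ℝ}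

theorem exists_first_le_apply (hg : ContinuousOn g (Icc a b)) (hab : a ≤ b) (hν : ν ≤ g b) :
    ∃ a' ∈ Icc a b, ν ≤ g a' ∧ ∀ t ∈ Ico a a', g t < ν := by
  have hclosed : IsClosed (Icc a b ∩ g ⁻¹' Ici ν) :=
    hg.preimage_isClosed_of_isClosed isClosed_Icc isClosed_Ici
  obtain ⟨a', ⟨ha', hga'⟩, hleast⟩ :=
    (isCompact_Icc.of_isClosed_subset hclosed inter_subset_left).exists_isLeast
      ⟨b, right_mem_Icc.2 hab, hν⟩
  refine ⟨a', ha', hga', fun t ht => lt_of_not_ge fun hgt => ?_⟩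
  exact (hleast ⟨⟨ht.1, ht.2.le.trans ha'.2⟩, hgt⟩).not_gt ht.2

theorem exists_last_le_apply (hg : ContinuousOn g (Icc a b)) (hab : a ≤ b) (hν : ν ≤ g a) :
    ∃ b' ∈ Icc a b, ν ≤ g b' ∧ ∀ t ∈ Ioc b' b, g t < ν := by
  have hclosed : IsClosed (Icc a b ∩ g ⁻¹' Ici ν) :=
    hg.preimage_isClosed_of_isClosed isClosed_Icc isClosed_Ici
  obtain ⟨b', ⟨hb', hgb'⟩, hgreatest⟩ :=
    (isCompact_Icc.of_isClosed_subset hclosed inter_subset_left).exists_isGreatest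
      ⟨a, left_mem_Icc.2 hab, hν⟩
  refine ⟨b', hb', hgb', fun t ht => lt_of_not_ge fun hgt => ?_⟩
  exact (hgreatest ⟨⟨hb'.1.trans ht.1.le, ht.2⟩, hgt⟩).not_gt ht.1

theorem ordConnected_setOf_le_of_monotoneOn_deriv {r μ : ℝ} (hg : ∀ t, HasDerivAt g (g' t) t)
    (hmono : MonotoneOn g' {t | g t < r}) (hμ : μ < r) : OrdConnected {t | g t ≤ μ} := by
  refine ⟨fun a ha b hb τ hτ => show g τ ≤ μ from le_of_not_gt fun hgτ => ?_⟩
  have hga : g a ≤ μ := ha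
  have hgb : g b ≤ μ := hb
  have hcont : Continuous g := continuous_iff_continuousAt.2 fun t => (hg t).continuousAt
  obtain ⟨ν, hμν, hν⟩ := exists_between (lt_min hgτ hμ)
  obtain ⟨a', ha', hga', hbefore⟩ :=
    exists_first_le_apply hcont.continuousOn hτ.1 (hν.le.trans (min_le_left _ _))
  obtain ⟨b', hb', hgb', hafter⟩ :=
    exists_last_le_apply hcont.continuousOn hτ.2 (hν.le.trans (min_le_left _ _))
  have hνr : ν < r := hν.trans_le (min_le_right _ _)
  have haa' : a < a' := ha'.1.lt_of_ne (by rintro rfl; exact (hga.trans_lt hμν).not_ge hga')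
  have hb'b : b' < b := hb'.2.lt_of_ne (by rintro rfl; exact (hgb.trans_lt hμν).not_ge hgb')
  obtain ⟨c, hc, hslope_c⟩ := exists_hasDerivAt_eq_slope g g' haa' hcont.continuousOn
    fun t _ => hg t
  obtain ⟨d, hd, hslope_d⟩ := exists_hasDerivAt_eq_slope g g' hb'b hcont.continuousOn
    fun t _ => hg t
  have hgc : g c < ν := hbefore c ⟨hc.1.le, hc.2⟩
  have hgd : g d < ν := hafter d ⟨hd.1, hd.2.le⟩
  have hrising : 0 < g' c := by
    rw [hslope_c]
    exact div_pos (by linarith) (by linarith [hc.1])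
  have hfalling : g' d < 0 := by
    rw [hslope_d]
    exact div_neg_of_neg_of_pos (by linarith) (by linarith [hd.1])
  have hcd : c ≤ d := by linarith [hc.2, ha'.2, hb'.1, hd.1]
  linarith [hmono (hgc.trans hνr) (hgd.trans hνr) hcd]

end RealLine

section Hilbert

variable {X : Type*} [NormedAddCommGroup X] [InnerProductSpace ℝ X]

theorem real_inner_id_sub_nonneg_of_norm_sub_le {F : X → X} {x y : X}
    (h : ‖F x - F y‖ ≤ ‖x - y‖) : 0 ≤ inner ℝ (x - F x - (y - F y)) (x - y) := by
  have hF : inner ℝ (F x - F y) (x - y) ≤ ‖x - y‖ ^ 2 :=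
    calc inner ℝ (F x - F y) (x - y) ≤ ‖F x - F y‖ * ‖x - y‖ := real_inner_le_norm _ _
      _ ≤ ‖x - y‖ * ‖x - y‖ := by gcongr
      _ = ‖x - y‖ ^ 2 := (sq _).symm
  have hsplit : x - F x - (y - F y) = (x - y) - (F x - F y) := by abel
  rw [hsplit, inner_sub_left, real_inner_self_eq_norm_sq]
  linarith

theorem exists_mem_iInter_of_antitone_convex [CompleteSpace X] {C : ℕ → Set X}
    (hanti : Antitone C) (hconv : ∀ n, Convex ℝ (C n)) (hclosed : ∀ n, IsClosed (C n))
    (hne : ∀ n, (C n).Nonempty) (hbdd : Bornology.IsBounded (C 0)) : (⋂ n, C n).Nonempty := by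
  choose x hxC hxmin using fun n =>
    exists_norm_eq_iInf_of_complete_convex (hne n) (hclosed n).isComplete (hconv n) 0
  have hproj : ∀ n, ∀ w ∈ C n, ‖x n‖ ^ 2 ≤ inner ℝ (x n) w := fun n w hw => by
    have := (norm_eq_iInf_iff_real_inner_le_zero (hconv n) (hxC n)).1 (hxmin n) w hw
    rw [zero_sub, inner_neg_left, inner_sub_right, real_inner_self_eq_norm_sq] at this
    linarith
  have hstep : ∀ n m, n ≤ m → dist (x n) (x m) ^ 2 ≤ ‖x m‖ ^ 2 - ‖x n‖ ^ 2 := fun n m hnm => by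
    rw [dist_eq_norm, norm_sub_sq_real]
    linarith [hproj n (x m) (hanti hnm (hxC m))]
  have hmono : Monotone fun n => ‖x n‖ ^ 2 := fun n m hnm => by
    linarith [hstep n m hnm, sq_nonneg (dist (x n) (x m))]
  obtain ⟨R, hR⟩ := hbdd.exists_norm_le
  have hbddA : BddAbove (range fun n => ‖x n‖ ^ 2) := ⟨R ^ 2, forall_mem_range.2 fun n => by
    gcongr
    exact hR _ (hanti (Nat.zero_le n) (hxC n))⟩
  obtain ⟨y, hy⟩ := cauchySeq_tendsto_of_complete (cauchySeq_of_sq_dist_le_sub hmono hbddA hstep)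
  exact ⟨y, mem_iInter.2 fun n => (hclosed n).mem_of_tendsto hy
    (eventually_atTop.2 ⟨n, fun m hm => hanti hm (hxC m)⟩)⟩

variable {J Ψ : X → ℝ} {J' : X → X} {r : ℝ}

theorem hasDerivAt_comp_add_smul
    (hGateaux : ∀ x v : X, HasDerivAt (fun t : ℝ => J (x + t • v)) (inner ℝ (J' x) v : ℝ) 0)
    (hΨ : ∀ x, Ψ x = (1 / 2 : ℝ) * ‖x‖ ^ 2 - J x) (u w : X) (t : ℝ) :
    HasDerivAt (fun s : ℝ => Ψ (u + s • w))
      (inner ℝ (u + t • w - J' (u + t • w)) w) t := by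
  have hline : HasDerivAt (fun s : ℝ => u + s • w) w t := by
    simpa using ((hasDerivAt_id t).smul_const w).const_add u
  have hJ : HasDerivAt (fun s : ℝ => J (u + s • w)) (inner ℝ (J' (u + t • w)) w) t := by
    have := (sub_self t ▸ hGateaux (u + t • w) w).comp_sub_const t t
    refine this.congr_of_eventuallyEq (Eventually.of_forall fun s => ?_)
    dsimp only
    congr 1
    module
  have hΨline : (fun s : ℝ => Ψ (u + s • w)) =
      fun s => (1 / 2 : ℝ) * ‖u + s • w‖ ^ 2 - J (u + s • w) := funext fun s => hΨ _
  rw [hΨline, inner_sub_left]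
  exact ((hline.norm_sq.const_mul (1 / 2 : ℝ)).sub hJ).congr_deriv (by ring)

theorem monotoneOn_real_inner_id_sub_add_smul {F : X → X} {S : Set X}
    (hF : ∀ x ∈ S, ∀ y ∈ S, ‖F x - F y‖ ≤ ‖x - y‖) (u w : X) :
    MonotoneOn (fun t : ℝ => inner ℝ (u + t • w - F (u + t • w)) w) {t | u + t • w ∈ S} := by
  intro c hc d hd hcd
  rcases hcd.eq_or_lt with rfl | hlt
  · exact le_rfl
  have key := real_inner_id_sub_nonneg_of_norm_sub_le (hF _ hd _ hc)
  have hdiff : u + d • w - (u + c • w) = (d - c) • w := by module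
  rw [hdiff, real_inner_smul_right, inner_sub_left] at key
  exact sub_nonneg.1 (nonneg_of_mul_nonneg_right key (sub_pos.2 hlt))

theorem convex_setOf_le_of_lt
    (hGateaux : ∀ x v : X, HasDerivAt (fun t : ℝ => J (x + t • v)) (inner ℝ (J' x) v : ℝ) 0)
    (hΨ : ∀ x, Ψ x = (1 / 2 : ℝ) * ‖x‖ ^ 2 - J x)
    (hnonexp : ∀ u ∈ {x | Ψ x < r}, ∀ v ∈ {x | Ψ x < r}, ‖J' u - J' v‖ ≤ ‖u - v‖)
    {μ : ℝ} (hμ : μ < r) : Convex ℝ {x | Ψ x ≤ μ} := by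
  intro u hu v hv a b ha hb hab
  have hseg := ordConnected_setOf_le_of_monotoneOn_deriv
    (hasDerivAt_comp_add_smul hGateaux hΨ u (v - u))
    (monotoneOn_real_inner_id_sub_add_smul hnonexp u (v - u)) hμ
  have hcomb : a • u + b • v = u + b • (v - u) := by
    rw [eq_sub_of_add_eq hab]
    module
  rw [hcomb]
  exact hseg.out (show Ψ (u + (0 : ℝ) • (v - u)) ≤ μ by simpa using hu)
    (show Ψ (u + (1 : ℝ) • (v - u)) ≤ μ by simpa using hv) ⟨hb, by linarith⟩

theorem exists_forall_le_of_isBounded_setOf_lt [CompleteSpace X] (hJcont : Continuous J)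
    (hGateaux : ∀ x v : X, HasDerivAt (fun t : ℝ => J (x + t • v)) (inner ℝ (J' x) v : ℝ) 0)
    (hΨ : ∀ x, Ψ x = (1 / 2 : ℝ) * ‖x‖ ^ 2 - J x)
    (hr : ∃ x, Ψ x < r) (hbdd : Bornology.IsBounded {x | Ψ x < r})
    (hnonexp : ∀ u ∈ {x | Ψ x < r}, ∀ v ∈ {x | Ψ x < r}, ‖J' u - J' v‖ ≤ ‖u - v‖) :
    ∃ x, ∀ y, Ψ x ≤ Ψ y := by
  have hΨcont : Continuous Ψ := by
    rw [show Ψ = _ from funext hΨ]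
    fun_prop
  refine exists_forall_le_of_antitone_sublevels hr fun c hanti hcr hne => ?_
  obtain ⟨x, hx⟩ := exists_mem_iInter_of_antitone_convex (C := fun n => {x | Ψ x ≤ c n})
    (fun n m hnm x hx => le_trans hx (hanti hnm))
    (fun n => convex_setOf_le_of_lt hGateaux hΨ hnonexp (hcr n))
    (fun n => isClosed_le hΨcont continuous_const) hne
    (hbdd.subset fun x hx => lt_of_le_of_lt hx (hcr 0))
  exact ⟨x, mem_iInter.1 hx⟩

end Hilbert

theorem stmt_18_general {X : Type*} [NormedAddCommGroup X] [InnerProductSpace ℝ X] [CompleteSpace X]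
    (J : X → ℝ) (hJcont : Continuous J)
    (J' : X → X)
    (hGateaux : ∀ x v : X, HasDerivAt (fun t : ℝ => J (x + t • v)) (inner ℝ (J' x) v : ℝ) 0)
    (Ψ : X → ℝ) (hΨ : ∀ x, Ψ x = (1 / 2 : ℝ) * ‖x‖ ^ 2 - J x)
    (r : ℝ) (hr : ∃ x, Ψ x < r) (hbdd : Bornology.IsBounded {x | Ψ x < r})
    (hnonexp : ∀ u ∈ {x | Ψ x < r}, ∀ v ∈ {x | Ψ x < r}, ‖J' u - J' v‖ ≤ ‖u - v‖) :
    ∀ ρ : ℝ, (∃ x, Ψ x < ρ) → ρ < r →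
      IsConnected (show Set (WeakSpace ℝ X) from {x | Ψ x ≤ ρ}) ∧
        IsConnected (show Set (WeakSpace ℝ X) from {x | ∀ y, Ψ x ≤ Ψ y}) := by
  intro ρ ⟨xρ, hxρ⟩ hρr
  obtain ⟨xm, hxm⟩ := exists_forall_le_of_isBounded_setOf_lt hJcont hGateaux hΨ hr hbdd hnonexp
  have hminimizers : (show Set (WeakSpace ℝ X) from {x | ∀ y, Ψ x ≤ Ψ y}) =
      (show Set (WeakSpace ℝ X) from {x | Ψ x ≤ Ψ xm}) :=
    Set.ext fun x => ⟨fun h => h xm, fun h y => h.trans (hxm y)⟩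
  refine ⟨Convex.isConnected (E := WeakSpace ℝ X)
    (convex_setOf_le_of_lt hGateaux hΨ hnonexp hρr) ⟨xρ, hxρ.le⟩, ?_⟩
  rw [hminimizers]
  exact Convex.isConnected (E := WeakSpace ℝ X)
    (convex_setOf_le_of_lt hGateaux hΨ hnonexp ((hxm xρ).trans_lt (hxρ.trans hρr)))
    ⟨xm, show Ψ xm ≤ Ψ xm from le_rfl⟩

/-- Theorem 11 of the paper: let `X` be a separable real Hilbert space and `J : X → ℝ` a
continuous, Gâteaux differentiable (with Gâteaux derivative represented by `J' : X → X`)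
and sequentially weakly upper semicontinuous functional. Set `Ψ x = ½‖x‖² − J x`. Assume
that for some `r > inf Ψ` the sublevel set `Ψ⁻¹((-∞,r))` is bounded and the restriction of
`J'` to it is nonexpansive. Then for every `ρ ∈ (inf Ψ, r)` the sets `Ψ⁻¹((-∞,ρ])` and
`Ψ⁻¹(inf Ψ)` (the set of global minimizers) are connected in the weak topology of `X`. -/
theorem stmt_18 {X : Type*} [NormedAddCommGroup X] [InnerProductSpace ℝ X] [CompleteSpace X]
    [TopologicalSpace.SeparableSpace X]
    (J : X → ℝ) (hJcont : Continuous J)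
    (J' : X → X)
    (hGateaux : ∀ x v : X, HasDerivAt (fun t : ℝ => J (x + t • v)) (inner ℝ (J' x) v : ℝ) 0)
    (hwusc : ∀ (x : X) (u : ℕ → X),
      (∀ y : X, Tendsto (fun n => (inner ℝ (u n) y : ℝ)) atTop (𝓝 (inner ℝ x y : ℝ))) →
      atTop.limsup (fun n => J (u n)) ≤ J x)
    (Ψ : X → ℝ) (hΨ : ∀ x, Ψ x = (1 / 2 : ℝ) * ‖x‖ ^ 2 - J x)
    (r : ℝ) (hr : ∃ x, Ψ x < r) (hbdd : Bornology.IsBounded {x | Ψ x < r})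
    (hnonexp : ∀ u ∈ {x | Ψ x < r}, ∀ v ∈ {x | Ψ x < r}, ‖J' u - J' v‖ ≤ ‖u - v‖) :
    ∀ ρ : ℝ, (∃ x, Ψ x < ρ) → ρ < r →
      IsConnected (show Set (WeakSpace ℝ X) from {x | Ψ x ≤ ρ}) ∧
        IsConnected (show Set (WeakSpace ℝ X) from {x | ∀ y, Ψ x ≤ Ψ y}) :=
  stmt_18_general J hJcont J' hGateaux Ψ hΨ r hr hbdd hnonexp
end
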